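/- (Convergence) Set a_t := E‖∇f(θ_t)‖², assume a_t + v_t > 0 and v_t ≤ V for all t, and choose η_t = a_t / (L' (a_t + v_t)). Then with K := 2 L' · E[f(θ*) − f(θ_0)], the averaged squared gradient norms satisfy (1/T) Σ_{t=0}^{T−1} E‖∇f(θ_t)‖² ≤ K/T + √(K V / T); in particular the left-hand side is O(1/√T). -/

import Mathlib

/-!
By the descent lemma for the `L`-smooth `f`, one ascent step gains in expectation at least
`η_t a_t - (L/2) η_t² E‖∇f(θ_t) + ξ_t‖²`. Because the noise is conditionally centred, the cross term
`E⟪∇f(θ_t), ξ_t⟫` vanishes, so `E‖∇f(θ_t) + ξ_t‖² ≤ a_t + v_t`, and for the chosen `η_t` the gain is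
`a_t² / (2L (a_t + v_t))`. Telescoping against the maximum `f θ*` gives `Σ a_t² / (a_t + v_t) ≤ K`.
Cauchy–Schwarz then turns this into `S² ≤ K (S + T V)` for `S = Σ a_t`, whence `S ≤ K + √(K T V)`.
-/

open MeasureTheory Finset
open scoped RealInnerProductSpace

section Descent

variable {E : Type*} [NormedAddCommGroup E] [InnerProductSpace ℝ E] [CompleteSpace E]
  {f : E → ℝ} {f' : E → E} {L : ℝ}

theorem le_apply_add_of_lipschitz_gradient (hf : ∀ x, HasGradientAt f (f' x) x)
    (hlip : ∀ x y, ‖f' x - f' y‖ ≤ L * ‖x - y‖) (x u : E) :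
    f x + ⟪f' x, u⟫ - L / 2 * ‖u‖ ^ 2 ≤ f (x + u) := by
  let g : ℝ → ℝ := fun s ↦ f (x + s • u) - s * ⟪f' x, u⟫ + L / 2 * ‖u‖ ^ 2 * s ^ 2
  have hg : ∀ s, HasDerivAt g (⟪f' (x + s • u), u⟫ - ⟪f' x, u⟫ + L * ‖u‖ ^ 2 * s) s := by
    intro s
    have hline : HasDerivAt (fun s : ℝ ↦ x + s • u) u s := by
      simpa using ((hasDerivAt_id s).smul_const u).const_add x
    have hfline := (hf (x + s • u)).hasFDerivAt.comp_hasDerivAt s hline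
    simp only [InnerProductSpace.toDual_apply_apply] at hfline
    refine ((hfline.sub ((hasDerivAt_id s).mul_const ⟪f' x, u⟫)).add
      ((hasDerivAt_pow 2 s).const_mul (L / 2 * ‖u‖ ^ 2))).congr_deriv ?_
    simp only [one_mul]
    ring
  have hg_nonneg : ∀ s ∈ interior (Set.Ici (0 : ℝ)),
      0 ≤ ⟪f' (x + s • u), u⟫ - ⟪f' x, u⟫ + L * ‖u‖ ^ 2 * s := by
    intro s hs
    rw [interior_Ici] at hs
    have hlip_s : ‖f' (x + s • u) - f' x‖ ≤ L * (s * ‖u‖) := by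
      simpa [norm_smul, abs_of_pos hs.out] using hlip (x + s • u) x
    have := real_inner_le_norm (f' (x + s • u) - f' x) (-u)
    rw [inner_neg_right, inner_sub_left, norm_neg] at this
    nlinarith [norm_nonneg u]
  have hmono : MonotoneOn g (Set.Ici 0) :=
    monotoneOn_of_hasDerivWithinAt_nonneg (convex_Ici 0)
      (fun s _ ↦ (hg s).continuousAt.continuousWithinAt) (fun s _ ↦ (hg s).hasDerivWithinAt)
      hg_nonneg
  have := hmono Set.self_mem_Ici (Set.mem_Ici.2 zero_le_one) zero_le_one
  simp only [g, zero_smul, one_smul, add_zero] at this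
  linarith

end Descent

section Noise

variable {Ω E : Type*} [NormedAddCommGroup E] [InnerProductSpace ℝ E]
  {m m0 : MeasurableSpace Ω} {P : Measure Ω} {g ξ : Ω → E}

theorem MeasureTheory.MemLp.integrable_inner (hg : MemLp g 2 P) (hξ : MemLp ξ 2 P) :
    Integrable (fun ω ↦ ⟪g ω, ξ ω⟫) P :=
  memLp_one_iff_integrable.1 <| .of_bilin (fun x y : E ↦ ⟪x, y⟫) 1 hg hξ (hg.1.inner hξ.1)
    (.of_forall fun _ ↦ by simpa using nnnorm_inner_le_nnnorm (𝕜 := ℝ) _ _)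

variable [CompleteSpace E] [IsFiniteMeasure P]

theorem integral_inner_eq_zero_of_condExp_eq_zero (hm : m ≤ m0) (hgm : StronglyMeasurable[m] g)
    (hg : MemLp g 2 P) (hξ : MemLp ξ 2 P) (hξ_mean : P[ξ|m] =ᵐ[P] 0) :
    ∫ ω, ⟪g ω, ξ ω⟫ ∂P = 0 := by
  have hpull := condExp_bilin_of_stronglyMeasurable_left (innerSL ℝ) hgm
    (hg.integrable_inner hξ) (hξ.integrable one_le_two)
  rw [← integral_condExp hm]
  refine (integral_congr_ae hpull).trans (integral_eq_zero_of_ae ?_)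
  filter_upwards [hξ_mean] with ω hω
  simp [hω]

theorem integral_le_of_condExp_le [IsProbabilityMeasure P] (hm : m ≤ m0) {X : Ω → ℝ} {c : ℝ}
    (hX : ∀ᵐ ω ∂P, P[X|m] ω ≤ c) : ∫ ω, X ω ∂P ≤ c := by
  rw [← integral_condExp hm]
  simpa using integral_mono_ae integrable_condExp (integrable_const c) hX

end Noise

section Step

variable {Ω E : Type*} [NormedAddCommGroup E] [InnerProductSpace ℝ E] [CompleteSpace E]
  {m m0 : MeasurableSpace Ω} {P : Measure Ω} [IsProbabilityMeasure P]

theorem integral_norm_add_sq_le (hm : m ≤ m0) {g ξ : Ω → E} (hgm : StronglyMeasurable[m] g)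
    (hg : MemLp g 2 P) (hξ : MemLp ξ 2 P) (hξ_mean : P[ξ|m] =ᵐ[P] 0) {v : ℝ}
    (hξ_var : ∀ᵐ ω ∂P, P[fun ω ↦ ‖ξ ω‖ ^ 2|m] ω ≤ v) :
    ∫ ω, ‖g ω + ξ ω‖ ^ 2 ∂P ≤ ∫ ω, ‖g ω‖ ^ 2 ∂P + v := by
  have hg2 := (memLp_two_iff_integrable_sq_norm hg.1).1 hg
  have hξ2 := (memLp_two_iff_integrable_sq_norm hξ.1).1 hξ
  have hcross := hg.integrable_inner hξ
  simp_rw [norm_add_sq_real]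
  rw [integral_add (hg2.fun_add (hcross.const_mul 2)) hξ2, integral_add hg2 (hcross.const_mul 2),
    integral_const_mul, integral_inner_eq_zero_of_condExp_eq_zero hm hgm hg hξ hξ_mean]
  linarith [integral_le_of_condExp_le hm hξ_var]

variable {f : E → ℝ} {f' : E → E} {L : ℝ}

theorem integrable_gap_and_integral_gap_le_of_sgd_step (hm : m ≤ m0)
    (hf : ∀ x, HasGradientAt f (f' x) x) (hlip : ∀ x y, ‖f' x - f' y‖ ≤ L * ‖x - y‖) (hL : 0 ≤ L)
    {fmax : ℝ} (hmax : ∀ x, f x ≤ fmax) {x x' ξ : Ω → E} {η v : ℝ}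
    (hx' : ∀ ω, x' ω = x ω + η • (f' (x ω) + ξ ω)) (hxm : StronglyMeasurable[m] x)
    (hgap : Integrable (fun ω ↦ fmax - f (x ω)) P)
    (hgrad : Integrable (fun ω ↦ ‖f' (x ω)‖ ^ 2) P) (hξ : MemLp ξ 2 P)
    (hξ_mean : P[ξ|m] =ᵐ[P] 0) (hξ_var : ∀ᵐ ω ∂P, P[fun ω ↦ ‖ξ ω‖ ^ 2|m] ω ≤ v) :
    Integrable (fun ω ↦ fmax - f (x' ω)) P ∧
      ∫ ω, fmax - f (x' ω) ∂P ≤ ∫ ω, fmax - f (x ω) ∂P - η * ∫ ω, ‖f' (x ω)‖ ^ 2 ∂P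
        + L / 2 * η ^ 2 * (∫ ω, ‖f' (x ω)‖ ^ 2 ∂P + v) := by
  have hf_cont : Continuous f :=
    continuous_iff_continuousAt.2 fun x ↦ (hf x).differentiableAt.continuousAt
  have hf'_cont : Continuous f' :=
    (LipschitzWith.of_dist_le' (K := L) (by simpa only [dist_eq_norm] using hlip)).continuous
  have hGm : StronglyMeasurable[m] fun ω ↦ f' (x ω) := hf'_cont.comp_stronglyMeasurable hxm
  have hG : MemLp (fun ω ↦ f' (x ω)) 2 P :=
    (memLp_two_iff_integrable_sq_norm (hGm.mono hm).aestronglyMeasurable).2 hgrad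
  have hGξ := hG.add hξ
  have hcross := hG.integrable_inner hξ
  have hdrift_int : Integrable (fun ω ↦ η * (‖f' (x ω)‖ ^ 2 + ⟪f' (x ω), ξ ω⟫)) P :=
    (hgrad.fun_add hcross).const_mul η
  have hnoise_int : Integrable (fun ω ↦ L / 2 * η ^ 2 * ‖f' (x ω) + ξ ω‖ ^ 2) P :=
    ((memLp_two_iff_integrable_sq_norm hGξ.1).1 hGξ).const_mul _
  have hbound_int := (hgap.sub' hdrift_int).fun_add hnoise_int
  have hpt : ∀ ω, fmax - f (x' ω) ≤ fmax - f (x ω) - η * (‖f' (x ω)‖ ^ 2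
      + ⟪f' (x ω), ξ ω⟫) + L / 2 * η ^ 2 * ‖f' (x ω) + ξ ω‖ ^ 2 := by
    intro ω
    have := le_apply_add_of_lipschitz_gradient hf hlip (x ω) (η • (f' (x ω) + ξ ω))
    rw [← hx', real_inner_smul_right, inner_add_right, real_inner_self_eq_norm_sq, norm_smul,
      mul_pow, Real.norm_eq_abs, sq_abs] at this
    linarith
  have hx'_meas : AEStronglyMeasurable x' P := by
    rw [show x' = _ from funext hx']
    exact ((hxm.mono hm).aestronglyMeasurable.add (hGξ.1.const_smul η))
  -- the new gap lies between `0` and the integrable bound of `hpt`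
  have hgap' : Integrable (fun ω ↦ fmax - f (x' ω)) P :=
    hbound_int.mono' (aestronglyMeasurable_const.sub (hf_cont.comp_aestronglyMeasurable hx'_meas))
      (.of_forall fun ω ↦ by
        rw [Real.norm_of_nonneg (sub_nonneg.2 (hmax _))]
        exact hpt ω)
  refine ⟨hgap', (integral_mono hgap' hbound_int hpt).trans ?_⟩
  rw [integral_add (hgap.sub' hdrift_int) hnoise_int, integral_sub hgap hdrift_int,
    integral_const_mul, integral_const_mul, integral_add hgrad hcross,
    integral_inner_eq_zero_of_condExp_eq_zero hm hGm hG hξ hξ_mean, add_zero]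
  gcongr
  exact integral_norm_add_sq_le hm hGm hG hξ hξ_mean hξ_var

end Step

section Averaging

theorem sum_range_le_sub_of_le_sub {g c : ℕ → ℝ} {T : ℕ} (h : ∀ t < T, g (t + 1) ≤ g t - c t) :
    ∑ t ∈ range T, c t ≤ g 0 - g T := by
  induction T with
  | zero => simp
  | succ T ih =>
    rw [sum_range_succ]
    linarith [ih fun t ht ↦ h t (by omega), h T (by omega)]

theorem le_add_sqrt_of_sq_le {x K c : ℝ} (hK : 0 ≤ K) (hc : 0 ≤ c) (h : x ^ 2 ≤ K * x + c) :
    x ≤ K + √c := by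
  nlinarith [Real.sq_sqrt hc, Real.sqrt_nonneg c]

theorem mean_le_of_sum_sq_div_le {T : ℕ} {a v : ℕ → ℝ} {V K : ℝ} (hV : 0 ≤ V)
    (hav : ∀ t < T, 0 < a t + v t) (hvV : ∀ t < T, v t ≤ V)
    (hK : ∑ t ∈ range T, a t ^ 2 / (a t + v t) ≤ K) :
    (T : ℝ)⁻¹ * ∑ t ∈ range T, a t ≤ K / T + √(K * V / T) := by
  have hav' : ∀ t ∈ range T, 0 < a t + v t := fun t ht ↦ hav t (mem_range.1 ht)
  have hK0 : 0 ≤ K := (sum_nonneg fun t ht ↦ div_nonneg (sq_nonneg _) (hav' t ht).le).trans hK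
  have hcs : (∑ t ∈ range T, a t) ^ 2 ≤ K * ((∑ t ∈ range T, a t) + T * V) := calc
    (∑ t ∈ range T, a t) ^ 2
      ≤ (∑ t ∈ range T, a t ^ 2 / (a t + v t)) * ∑ t ∈ range T, (a t + v t) :=
        sum_sq_le_sum_mul_sum_of_sq_le_mul _
          (fun t ht ↦ div_nonneg (sq_nonneg _) (hav' t ht).le) (fun t ht ↦ (hav' t ht).le)
          (fun t ht ↦ (div_mul_cancel₀ _ (hav' t ht).ne').ge)
    _ ≤ K * ((∑ t ∈ range T, a t) + T * V) := by
        gcongr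
        · exact sum_nonneg fun t ht ↦ (hav' t ht).le
        · rw [sum_add_distrib]
          gcongr
          simpa using sum_le_sum fun t ht ↦ hvV t (mem_range.1 ht)
  have hS := le_add_sqrt_of_sq_le hK0 (by positivity) (hcs.trans_eq (mul_add _ _ _))
  calc (T : ℝ)⁻¹ * ∑ t ∈ range T, a t ≤ (T : ℝ)⁻¹ * (K + √(K * (T * V))) := by gcongr
    _ = K / T + √(K * V / T) := by
        rw [mul_add, inv_mul_eq_div]
        congr 1
        rcases (Nat.cast_nonneg (α := ℝ) T).eq_or_lt with hT | hT
        · simp [← hT]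
        · rw [show K * (T * V) = K * V / T * T ^ 2 by field_simp, Real.sqrt_mul' _ (sq_nonneg _),
            Real.sqrt_sq hT.le]
          field_simp

end Averaging

theorem sgd_convergence_optimal_lr_general
    {d : ℕ}
    {Ω : Type*} {m0 : MeasurableSpace Ω} (P : Measure Ω) [IsProbabilityMeasure P]
    (ℱ : Filtration ℕ m0)
    (f : EuclideanSpace ℝ (Fin d) → ℝ)
    (f' : EuclideanSpace ℝ (Fin d) → EuclideanSpace ℝ (Fin d))
    (L' : ℝ) (hL' : 0 < L')
    (hdiff : ∀ x, HasGradientAt f (f' x) x)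
    (hlip : ∀ x y, ‖f' x - f' y‖ ≤ L' * ‖x - y‖)
    (θstar : EuclideanSpace ℝ (Fin d)) (hmax : ∀ x, f x ≤ f θstar)
    (T : ℕ) (η v : ℕ → ℝ)
    (θ : ℕ → Ω → EuclideanSpace ℝ (Fin d))
    (ξ : ℕ → Ω → EuclideanSpace ℝ (Fin d))
    (hθmeas : ∀ t, StronglyMeasurable[ℱ t] (θ t))
    (hθ0int : Integrable (fun ω => f θstar - f (θ 0 ω)) P)
    (hrec : ∀ t < T, ∀ ω, θ (t + 1) ω = θ t ω + η t • (f' (θ t ω) + ξ t ω))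
    (hξL2 : ∀ t < T, MemLp (ξ t) 2 P)
    (hξmean : ∀ t < T, P[fun ω => ξ t ω|ℱ t] =ᵐ[P] 0)
    (hξvar : ∀ t < T, ∀ᵐ ω ∂P, (P[fun ω => ‖ξ t ω‖ ^ 2|ℱ t]) ω ≤ v t)
    (hgradint : ∀ t, Integrable (fun ω => ‖f' (θ t ω)‖ ^ 2) P)
    (a : ℕ → ℝ) (ha : ∀ t, a t = ∫ ω, ‖f' (θ t ω)‖ ^ 2 ∂P)
    (hav : ∀ t < T, 0 < a t + v t)
    (hηdef : ∀ t < T, η t = a t / (L' * (a t + v t)))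
    (V : ℝ) (hV : 0 ≤ V) (hvV : ∀ t < T, v t ≤ V)
    (K : ℝ) (hK : K = 2 * L' * ∫ ω, (f θstar - f (θ 0 ω)) ∂P) :
    (T : ℝ)⁻¹ * ∑ t ∈ Finset.range T, a t ≤ K / T + Real.sqrt (K * V / T) := by
  have hstep t (ht : t < T) (hgap : Integrable (fun ω ↦ f θstar - f (θ t ω)) P) :=
    integrable_gap_and_integral_gap_le_of_sgd_step (ℱ.le t) hdiff hlip hL'.le hmax (hrec t ht)
      (hθmeas t) hgap (hgradint t) (hξL2 t ht) (hξmean t ht) (hξvar t ht)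
  have hgap_int : ∀ n ≤ T, Integrable (fun ω ↦ f θstar - f (θ n ω)) P := by
    intro n
    induction n with
    | zero => exact fun _ ↦ hθ0int
    | succ n ih => exact fun hn ↦ (hstep n hn (ih (by omega))).1
  have hdecr : ∀ t < T, ∫ ω, f θstar - f (θ (t + 1) ω) ∂P
      ≤ ∫ ω, f θstar - f (θ t ω) ∂P - a t ^ 2 / (a t + v t) / (2 * L') := by
    intro t ht
    have hgain : η t * a t - L' / 2 * η t ^ 2 * (a t + v t) = a t ^ 2 / (a t + v t) / (2 * L') := by
      rw [hηdef t ht]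
      field_simp [(hav t ht).ne']
      ring
    have := (hstep t ht (hgap_int t ht.le)).2
    rw [← ha t] at this
    linarith
  have hsum := sum_range_le_sub_of_le_sub (g := fun n ↦ ∫ ω, f θstar - f (θ n ω) ∂P) hdecr
  have hgapT : 0 ≤ ∫ ω, f θstar - f (θ T ω) ∂P := integral_nonneg fun ω ↦ sub_nonneg.2 (hmax _)
  rw [← sum_div, div_le_iff₀ (by positivity)] at hsum
  refine mean_le_of_sum_sq_div_le hV hav hvV ?_
  rw [hK]
  nlinarith [mul_nonneg hL'.le hgapT]

/-- (Convergence.) In the stochastic gradient ascent setting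
with `a_t = E‖∇f(θ_t)‖²`, `a_t + v_t > 0`, `v_t ≤ V`, and learning rates
`η_t = a_t / (L'(a_t + v_t))`, setting `K = 2L'·E[f(θ*) − f(θ_0)]`, one has
`(1/T) Σ_{t<T} E‖∇f(θ_t)‖² ≤ K/T + √(KV/T)`; in particular the averaged
squared gradient norms are `O(1/√T)`. -/
theorem sgd_convergence_optimal_lr
    {d : ℕ} (hd : 1 ≤ d)
    {Ω : Type*} {m0 : MeasurableSpace Ω} (P : Measure Ω) [IsProbabilityMeasure P]
    (ℱ : Filtration ℕ m0)
    (f : EuclideanSpace ℝ (Fin d) → ℝ)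
    (f' : EuclideanSpace ℝ (Fin d) → EuclideanSpace ℝ (Fin d))
    (L' : ℝ) (hL' : 0 < L')
    (hdiff : ∀ x, HasGradientAt f (f' x) x)
    (hlip : ∀ x y, ‖f' x - f' y‖ ≤ L' * ‖x - y‖)
    (θstar : EuclideanSpace ℝ (Fin d)) (hmax : ∀ x, f x ≤ f θstar)
    (T : ℕ) (η v : ℕ → ℝ) (hv : ∀ t < T, 0 ≤ v t)
    (θ : ℕ → Ω → EuclideanSpace ℝ (Fin d))
    (ξ : ℕ → Ω → EuclideanSpace ℝ (Fin d))
    (hθmeas : ∀ t, StronglyMeasurable[ℱ t] (θ t))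
    (hθ0int : Integrable (fun ω => f θstar - f (θ 0 ω)) P)
    (hrec : ∀ t < T, ∀ ω, θ (t + 1) ω = θ t ω + η t • (f' (θ t ω) + ξ t ω))
    (hξmeas : ∀ t < T, StronglyMeasurable[ℱ (t + 1)] (ξ t))
    (hξL2 : ∀ t < T, MemLp (ξ t) 2 P)
    (hξmean : ∀ t < T, P[fun ω => ξ t ω|ℱ t] =ᵐ[P] 0)
    (hξvar : ∀ t < T, ∀ᵐ ω ∂P, (P[fun ω => ‖ξ t ω‖ ^ 2|ℱ t]) ω ≤ v t)
    (hgradint : ∀ t, Integrable (fun ω => ‖f' (θ t ω)‖ ^ 2) P)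
    (a : ℕ → ℝ) (ha : ∀ t, a t = ∫ ω, ‖f' (θ t ω)‖ ^ 2 ∂P)
    (hav : ∀ t < T, 0 < a t + v t)
    (hηdef : ∀ t < T, η t = a t / (L' * (a t + v t)))
    (hT : 1 ≤ T) (V : ℝ) (hV : 0 ≤ V) (hvV : ∀ t < T, v t ≤ V)
    (K : ℝ) (hK : K = 2 * L' * ∫ ω, (f θstar - f (θ 0 ω)) ∂P) :
    (T : ℝ)⁻¹ * ∑ t ∈ Finset.range T, a t ≤ K / T + Real.sqrt (K * V / T) :=
  sgd_convergence_optimal_lr_general P ℱ f f' L' hL' hdiff hlip θstar hmax T η v θ ξ hθmeas hθ0int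
    hrec hξL2 hξmean hξvar hgradint a ha hav hηdef V hV hvV K hK
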